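/- arXiv:1708.01157 — 2 statements merged into one kernel-verified Lean document; each statement's English description precedes it below -/
import Mathlib

section
/- Let $P^1, P^2, P^3$ be real skew-symmetric $m \times m$ matrices. Then $\|[P^1,P^2]\|_F^2 + \|[P^1,P^3]\|_F^2 + \|[P^2,P^3]\|_F^2 \leq \tfrac{1}{3} \big( \|P^1\|_F^2 + \|P^2\|_F^2 + \|P^3\|_F^2 \big)^2$, where $[A,B] = AB - BA$ and $\|\cdot\|_F$ is the Frobenius norm. -/
open Matrix

/-- Frobenius norm of a real square matrix. -/
noncomputable def frobNorm {m : ℕ} (M : Matrix (Fin m) (Fin m) ℝ) : ℝ :=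
  Real.sqrt (Matrix.trace (Mᵀ * M))

open Complex BigOperators

noncomputable def fns {m : ℕ} (M : Matrix (Fin m) (Fin m) ℂ) : ℝ :=
  ∑ i, ∑ j, Complex.normSq (M i j)


lemma fns_nonneg {m : ℕ} (M : Matrix (Fin m) (Fin m) ℂ) : 0 ≤ fns M := by
  apply Finset.sum_nonneg; intro i _; apply Finset.sum_nonneg; intro j _
  exact Complex.normSq_nonneg _

lemma trace_conjTranspose_mul {m : ℕ} (M : Matrix (Fin m) (Fin m) ℂ) :
    Matrix.trace (Mᴴ * M) = (fns M : ℂ) := by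
  simp only [Matrix.trace, Matrix.diag, Matrix.mul_apply, Matrix.conjTranspose_apply, fns]
  push_cast
  rw [Finset.sum_comm]
  congr 1; ext i; congr 1; ext j
  rw [Complex.normSq_eq_conj_mul_self]
  rfl

lemma fns_unitary {m : ℕ} (U M : Matrix (Fin m) (Fin m) ℂ)
    (hU1 : star U * U = 1) (hU2 : U * star U = 1) :
    fns (star U * M * U) = fns M := by
  have h : Matrix.trace ((star U * M * U)ᴴ * (star U * M * U)) = Matrix.trace (Mᴴ * M) := by
    have : (star U * M * U)ᴴ = star U * Mᴴ * U := by
      simp [Matrix.conjTranspose_mul, Matrix.mul_assoc, star_eq_conjTranspose]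
    rw [this]
    have : star U * Mᴴ * U * (star U * M * U) = star U * (Mᴴ * M) * U := by
      simp only [← Matrix.mul_assoc]
      rw [Matrix.mul_assoc (star U * Mᴴ) U (star U), hU2, Matrix.mul_one]
    rw [this, Matrix.trace_mul_cycle, ← Matrix.mul_assoc, hU2, Matrix.one_mul]
  rw [trace_conjTranspose_mul, trace_conjTranspose_mul] at h
  exact_mod_cast h



lemma frobNorm_sq {m : ℕ} (M : Matrix (Fin m) (Fin m) ℝ) :
    frobNorm M ^ 2 = ∑ i, ∑ j, (M i j) ^ 2 := by
  have ht : Matrix.trace (Mᵀ * M) = ∑ i, ∑ j, (M i j) ^ 2 := by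
    simp only [Matrix.trace, Matrix.diag, Matrix.mul_apply, Matrix.transpose_apply]
    rw [Finset.sum_comm]
    congr 1; ext i; congr 1; ext j; ring
  have hnn : 0 ≤ ∑ i, ∑ j, (M i j) ^ 2 :=
    Finset.sum_nonneg fun i _ => Finset.sum_nonneg fun j _ => sq_nonneg _
  rw [frobNorm, ht, Real.sq_sqrt hnn]

lemma fns_map_ofReal {m : ℕ} (M : Matrix (Fin m) (Fin m) ℝ) :
    fns (M.map (Complex.ofRealHom : ℝ →+* ℂ)) = ∑ i, ∑ j, (M i j) ^ 2 := by
  unfold fns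
  congr 1; ext i; congr 1; ext j
  simp [Matrix.map_apply, Complex.normSq_ofReal, sq]

lemma sum2_le {m : ℕ} (μ : Fin m → ℝ) {a b : Fin m} (hab : a ≠ b) :
    μ a ^ 2 + μ b ^ 2 ≤ ∑ i, μ i ^ 2 := by
  have h := Finset.sum_le_sum_of_subset_of_nonneg
    (Finset.subset_univ ({a, b} : Finset (Fin m))) (fun i _ _ => sq_nonneg (μ i))
  rwa [Finset.sum_insert (by simp [hab]), Finset.sum_singleton] at h

lemma sum4_le {m : ℕ} (μ : Fin m → ℝ) {a b c d : Fin m} (hab : a ≠ b) (hac : a ≠ c)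
    (had : a ≠ d) (hbc : b ≠ c) (hbd : b ≠ d) (hcd : c ≠ d) :
    μ a ^ 2 + μ b ^ 2 + μ c ^ 2 + μ d ^ 2 ≤ ∑ i, μ i ^ 2 := by
  have h := Finset.sum_le_sum_of_subset_of_nonneg
    (Finset.subset_univ ({a, b, c, d} : Finset (Fin m))) (fun i _ _ => sq_nonneg (μ i))
  rwa [Finset.sum_insert (by simp [hab, hac, had]), Finset.sum_insert (by simp [hbc, hbd]),
    Finset.sum_insert (by simp [hcd]), Finset.sum_singleton, ← add_assoc, ← add_assoc] at h

lemma key_cases {m : ℕ} (μ : Fin m → ℝ) (Q C : Matrix (Fin m) (Fin m) ℂ)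
    (hpat : ∀ k l, Q k l ≠ 0 → μ l = -μ k)
    (hQ : Q * Qᴴ = 1)
    (hG : ∀ j, ∑ l, C j l * Q l j = 0)
    (j k : Fin m) :
    C j k = 0 ∨ (μ j - μ k) ^ 2 ≤ ∑ i, (μ i) ^ 2 := by
  have hrow : ∀ r, ∑ l, Complex.normSq (Q r l) = 1 := by
    intro r
    have h := congrFun (congrFun hQ r) r
    simp only [Matrix.mul_apply, Matrix.conjTranspose_apply, Matrix.one_apply_eq] at h
    have h2 : ∀ l, Q r l * star (Q r l) = (Complex.normSq (Q r l) : ℂ) :=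
      fun l => Complex.mul_conj (Q r l)
    rw [Finset.sum_congr rfl (fun l _ => h2 l)] at h
    exact_mod_cast h
  have horth : ∀ r s, r ≠ s → ∑ l, Q r l * star (Q s l) = 0 := by
    intro r s hrs
    have h := congrFun (congrFun hQ r) s
    simpa [Matrix.mul_apply, Matrix.conjTranspose_apply, Matrix.one_apply, hrs] using h
  have hex : ∀ r, ∃ l, Q r l ≠ 0 := by
    intro r
    by_contra h
    push_neg at h
    have h1 := hrow r
    simp [h] at h1
  have hpairtwo : ∀ r s, r ≠ s → μ r = μ s →
      ∃ a b, a ≠ b ∧ μ a = -μ r ∧ μ b = -μ r := by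
    intro r s hrs hμ
    obtain ⟨l, hl⟩ := hex r
    have hμl : μ l = -μ r := hpat r l hl
    by_cases hsing : ∃ t, t ≠ l ∧ μ t = -μ r
    · obtain ⟨t, ht1, ht2⟩ := hsing
      exact ⟨t, l, ht1, ht2, hμl⟩
    · exfalso
      push_neg at hsing
      have hsum : ∑ x, Q r x * star (Q s x) = Q r l * star (Q s l) := by
        apply Finset.sum_eq_single_of_mem l (Finset.mem_univ l)
        intro b _ hbl
        by_cases hb : Q r b = 0
        · simp [hb]
        · exact absurd (hpat r b hb) (hsing b hbl)
      rw [horth r s hrs] at hsum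
      have hQsl : Q s l = 0 := by
        rcases mul_eq_zero.mp hsum.symm with h | h
        · exact absurd h hl
        · exact star_eq_zero.mp h
      have h1 := hrow s
      have hz : ∀ x, Complex.normSq (Q s x) = 0 := by
        intro x
        by_cases hx : Q s x = 0
        · simp [hx]
        · have hμx : μ x = -μ s := hpat s x hx
          rw [← hμ] at hμx
          have : x = l := by
            by_contra hxl
            exact hsing x hxl hμx
          rw [this, hQsl] at hx
          exact absurd rfl hx
      simp [hz] at h1
  -- main case analysis
  by_cases h1 : μ j = μ k
  · right
    rw [h1, sub_self]
    simp only [ne_eq, zero_pow, OfNat.ofNat_ne_zero, not_false_eq_true]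
    positivity
  by_cases hjk : j = k
  · exact absurd (congrArg μ hjk) h1
  by_cases h0 : 0 ≤ μ j * μ k
  · right
    nlinarith [sum2_le μ hjk]
  push_neg at h0
  have hμj : μ j ≠ 0 := fun h => by rw [h] at h0; simp at h0
  have hμk : μ k ≠ 0 := fun h => by rw [h] at h0; simp at h0
  by_cases h2 : μ j = -μ k
  · -- opposite pair
    by_cases hj' : ∃ j', j' ≠ j ∧ μ j' = μ j
    · right
      obtain ⟨j', hj'1, hj'2⟩ := hj'
      obtain ⟨a, b, hab, ha, hb⟩ := hpairtwo j j' (Ne.symm hj'1) hj'2.symm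
      have haj : a ≠ j := fun h => hμj (by rw [h] at ha; linarith)
      have haj' : a ≠ j' := fun h => hμj (by rw [h, hj'2] at ha; linarith)
      have hbj : b ≠ j := fun h => hμj (by rw [h] at hb; linarith)
      have hbj' : b ≠ j' := fun h => hμj (by rw [h, hj'2] at hb; linarith)
      have h4 := sum4_le μ hab haj haj' hbj hbj' (Ne.symm hj'1)
      have ea : μ a ^ 2 = μ j ^ 2 := by rw [ha]; ring
      have eb : μ b ^ 2 = μ j ^ 2 := by rw [hb]; ring
      have ej : μ j' ^ 2 = μ j ^ 2 := by rw [hj'2]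
      have hμk2 : μ k = -μ j := by rw [h2]; ring
      have hgoal : (μ j - μ k) ^ 2 = 4 * μ j ^ 2 := by rw [hμk2]; ring
      rw [hgoal]; linarith
    · by_cases hk' : ∃ k', k' ≠ k ∧ μ k' = μ k
      · right
        obtain ⟨k', hk'1, hk'2⟩ := hk'
        obtain ⟨a, b, hab, ha, hb⟩ := hpairtwo k k' (Ne.symm hk'1) hk'2.symm
        have hak : a ≠ k := fun h => hμk (by rw [h] at ha; linarith)
        have hak' : a ≠ k' := fun h => hμk (by rw [h, hk'2] at ha; linarith)
        have hbk : b ≠ k := fun h => hμk (by rw [h] at hb; linarith)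
        have hbk' : b ≠ k' := fun h => hμk (by rw [h, hk'2] at hb; linarith)
        have h4 := sum4_le μ hab hak hak' hbk hbk' (Ne.symm hk'1)
        have ea : μ a ^ 2 = μ k ^ 2 := by rw [ha]; ring
        have eb : μ b ^ 2 = μ k ^ 2 := by rw [hb]; ring
        have ek : μ k' ^ 2 = μ k ^ 2 := by rw [hk'2]
        have hgoal : (μ j - μ k) ^ 2 = 4 * μ k ^ 2 := by rw [h2]; ring
        rw [hgoal]; linarith
      · -- exceptional: C j k = 0
        left
        push_neg at hj' hk'
        have hsum : ∑ l, C j l * Q l j = C j k * Q k j := by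
          apply Finset.sum_eq_single_of_mem k (Finset.mem_univ k)
          intro b _ hbk
          by_cases hb : Q b j = 0
          · simp [hb]
          · have : μ j = -μ b := hpat b j hb
            have hμb : μ b = μ k := by rw [h2] at this; linarith
            exact absurd hμb (hk' b hbk)
        rw [hG j] at hsum
        have hQkj : Q k j ≠ 0 := by
          intro hz
          have h1 := hrow k
          have hzz : ∀ x, Complex.normSq (Q k x) = 0 := by
            intro x
            by_cases hx : Q k x = 0
            · simp [hx]
            · have hμx : μ x = -μ k := hpat k x hx
              rw [← h2] at hμx
              have : x = j := by
                by_contra hxj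
                exact hj' x hxj hμx
              rw [this, hz] at hx
              exact absurd rfl hx
          simp [hzz] at h1
        rcases mul_eq_zero.mp hsum.symm with h | h
        · exact h
        · exact absurd h hQkj
  · -- generic: μ j μ k < 0, μ j ≠ -μ k
    right
    obtain ⟨l, hl⟩ := hex j
    obtain ⟨l', hl'⟩ := hex k
    have hμl : μ l = -μ j := hpat j l hl
    have hμl' : μ l' = -μ k := hpat k l' hl'
    have hjl : j ≠ l := fun h => hμj (by rw [← h] at hμl; linarith)
    have hjl' : j ≠ l' := fun h => h2 (by rw [← h] at hμl'; linarith)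
    have hkl : k ≠ l := fun h => h2 (by rw [← h] at hμl; linarith)
    have hkl' : k ≠ l' := fun h => hμk (by rw [← h] at hμl'; linarith)
    have hll' : l ≠ l' := fun h => by
      rw [h, hμl'] at hμl
      have : μ j = μ k := by linarith
      exact h1 this
    have h4 := sum4_le μ hjk hjl hjl' hkl hkl' hll'
    have el : μ l ^ 2 = μ j ^ 2 := by rw [hμl]; ring
    have el' : μ l' ^ 2 = μ k ^ 2 := by rw [hμl']; ring
    nlinarith [h4, el, el', sq_nonneg (μ j + μ k)]



section BL
variable {m : ℕ}

lemma BL (A B : Matrix (Fin m) (Fin m) ℝ) (hA : Aᵀ = -A) (hB : Bᵀ = -B) :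
    frobNorm (A * B - B * A) ^ 2 ≤ frobNorm A ^ 2 * frobNorm B ^ 2 := by
  classical
  set f : ℝ →+* ℂ := Complex.ofRealHom with hf
  set A' : Matrix (Fin m) (Fin m) ℂ := A.map f with hA'
  set B' : Matrix (Fin m) (Fin m) ℂ := B.map f with hB'
  have hArl : ∀ i j, (starRingEnd ℂ) (A' i j) = A' i j := by
    intro i j; rw [hA']; simp [Matrix.map_apply, hf, Complex.conj_ofReal]
  have hBrl : ∀ i j, (starRingEnd ℂ) (B' i j) = B' i j := by
    intro i j; rw [hB']; simp [Matrix.map_apply, hf, Complex.conj_ofReal]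
  have hA'T : A'ᵀ = -A' := by
    rw [hA', ← Matrix.transpose_map, hA]; ext i j; simp [Matrix.map_apply]
  have hB'T : B'ᵀ = -B' := by
    rw [hB', ← Matrix.transpose_map, hB]; ext i j; simp [Matrix.map_apply]
  set H : Matrix (Fin m) (Fin m) ℂ := Complex.I • A' with hHdef
  have hH : H.IsHermitian := by
    unfold Matrix.IsHermitian
    ext i j
    have hAe : A' j i = -A' i j := by
      have := congrFun (congrFun hA'T i) j
      simpa [Matrix.transpose_apply] using this
    simp only [hHdef, Matrix.conjTranspose_apply, Matrix.smul_apply, smul_eq_mul, star_mul',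
      Complex.star_def, Complex.conj_I, hAe]
    rw [map_neg, hArl]
    ring
  set U : Matrix (Fin m) (Fin m) ℂ :=
    (Matrix.IsHermitian.eigenvectorUnitary hH : Matrix (Fin m) (Fin m) ℂ) with hU
  set μ : Fin m → ℝ := hH.eigenvalues with hμdef
  set D : Matrix (Fin m) (Fin m) ℂ := Matrix.diagonal (RCLike.ofReal ∘ μ) with hD
  have hspec : H = U * D * star U := hH.spectral_theorem
  have hU2 : U * star U = 1 :=
    Matrix.mem_unitaryGroup_iff.mp (Matrix.IsHermitian.eigenvectorUnitary hH).2
  have hU1 : star U * U = 1 :=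
    Matrix.mem_unitaryGroup_iff'.mp (Matrix.IsHermitian.eigenvectorUnitary hH).2
  set Ubar : Matrix (Fin m) (Fin m) ℂ := U.map (starRingEnd ℂ) with hUbar
  have hUbarT : Ubarᵀ = star U := by
    ext i j; simp [hUbar, Matrix.conjTranspose_apply, Matrix.map_apply, Matrix.transpose_apply]
  have hstarUT : (star U)ᵀ = Ubar := by
    ext i j; simp [hUbar, Matrix.conjTranspose_apply, Matrix.map_apply, Matrix.transpose_apply]
  have hstarUmap : (star U).map (starRingEnd ℂ) = Uᵀ := by
    ext i j
    simp [Matrix.conjTranspose_apply, Matrix.map_apply, Matrix.transpose_apply]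
  have hmap1 : (1 : Matrix (Fin m) (Fin m) ℂ).map (starRingEnd ℂ) = 1 :=
    Matrix.map_one _ (map_zero _) (map_one _)
  have hUtUbar : Uᵀ * Ubar = 1 := by
    have h := congrArg (fun M : Matrix (Fin m) (Fin m) ℂ => M.map (starRingEnd ℂ)) hU1
    simpa [Matrix.map_mul, hstarUmap, hmap1] using h
  have hUbarUt : Ubar * Uᵀ = 1 := by
    have h := congrArg (fun M : Matrix (Fin m) (Fin m) ℂ => M.map (starRingEnd ℂ)) hU2
    simpa [Matrix.map_mul, hstarUmap, hmap1] using h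
  set Q : Matrix (Fin m) (Fin m) ℂ := star U * Ubar with hQ
  set C : Matrix (Fin m) (Fin m) ℂ := star U * B' * U with hC
  -- Q is unitary (row orthonormality form)
  have hstarUbar : star Ubar = Uᵀ := by
    ext i j
    simp [hUbar, Matrix.conjTranspose_apply, Matrix.map_apply, Matrix.transpose_apply]
  have hQunit : Q * Qᴴ = 1 := by
    have : Qᴴ = Uᵀ * U := by
      rw [hQ, ← star_eq_conjTranspose, Matrix.star_mul, star_star, hstarUbar]
    rw [this, hQ, Matrix.mul_assoc, ← Matrix.mul_assoc Ubar, hUbarUt, Matrix.one_mul, hU1]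
  -- conjugated spectral theorem
  have hHconj : H.map (starRingEnd ℂ) = -H := by
    ext i j
    simp only [Matrix.map_apply, hHdef, Matrix.smul_apply, smul_eq_mul, _root_.map_mul,
      Complex.conj_I, hArl, Matrix.neg_apply]
    ring
  have hDconj : D.map (starRingEnd ℂ) = D := by
    rw [hD]
    ext i j
    by_cases hij : i = j
    · subst hij
      simp [Matrix.map_apply, Matrix.diagonal_apply_eq, Function.comp_apply, RCLike.conj_ofReal]
    · simp [Matrix.map_apply, Matrix.diagonal_apply_ne _ hij]
  have hspecConj : -H = Ubar * D * Uᵀ := by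
    have h := congrArg (fun M : Matrix (Fin m) (Fin m) ℂ => M.map (starRingEnd ℂ)) hspec
    simpa [Matrix.map_mul, hstarUmap, hDconj, hHconj] using h
  have hDstarU : star U * H = D * star U := by
    rw [hspec, ← Matrix.mul_assoc, ← Matrix.mul_assoc, hU1, Matrix.one_mul]
  have hHU : H * U = U * D := by
    rw [hspec, Matrix.mul_assoc (U * D) (star U) U, hU1, Matrix.mul_one]
  have hQD : Q * D = -(D * Q) := by
    have h1 : Ubar * D = (-H) * Ubar := by
      rw [hspecConj, Matrix.mul_assoc, Matrix.mul_assoc, hUtUbar]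
      simp [Matrix.mul_assoc]
    rw [hQ, Matrix.mul_assoc, h1, Matrix.neg_mul, Matrix.mul_neg, ← Matrix.mul_assoc,
      hDstarU, Matrix.mul_assoc]
  have hpat : ∀ k l, Q k l ≠ 0 → μ l = -μ k := by
    intro k l hkl
    have h := congrFun (congrFun hQD k) l
    rw [hD] at h
    simp only [Matrix.mul_diagonal, Matrix.diagonal_mul, Matrix.neg_apply,
      Function.comp_apply] at h
    have h3 : Q k l * ((RCLike.ofReal (μ l) : ℂ) + (RCLike.ofReal (μ k) : ℂ)) = 0 := by
      rw [mul_add]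
      linear_combination h
    rcases mul_eq_zero.mp h3 with h4 | h4
    · exact absurd h4 hkl
    · rw [← RCLike.ofReal_add, RCLike.ofReal_eq_zero] at h4
      linarith
  -- skewness: diagonal of C * Q vanishes
  have hCQ : C * Q = star U * B' * Ubar := by
    rw [hC, hQ]
    simp only [← Matrix.mul_assoc]
    rw [Matrix.mul_assoc (star U * B') U (star U), hU2, Matrix.mul_one]
  have hGT : (star U * B' * Ubar)ᵀ = -(star U * B' * Ubar) := by
    rw [Matrix.transpose_mul, Matrix.transpose_mul, hUbarT, hstarUT, hB'T]
    simp [Matrix.mul_assoc]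
  have hGdiag : ∀ j, ∑ l, C j l * Q l j = 0 := by
    intro j
    have hskew : (C * Q)ᵀ = -(C * Q) := by rw [hCQ]; exact hGT
    have h2 := congrFun (congrFun hskew j) j
    simp only [Matrix.transpose_apply, Matrix.neg_apply] at h2
    have h3 : (C * Q) j j = 0 := by linear_combination (1/2 : ℂ) * h2
    rw [← Matrix.mul_apply]
    exact h3

  -- norm computations
  have hfns_smulI : ∀ M : Matrix (Fin m) (Fin m) ℂ, fns (Complex.I • M) = fns M := by
    intro M
    unfold fns
    congr 1; ext i; congr 1; ext j
    simp [Matrix.smul_apply, Complex.normSq_mul]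
  have hfnsH : fns H = fns A' := by rw [hHdef]; exact hfns_smulI A'
  have hDeq : D = star U * H * U := by
    rw [hspec]
    simp only [← Matrix.mul_assoc]
    rw [hU1, Matrix.one_mul, Matrix.mul_assoc D (star U) U, hU1, Matrix.mul_one]
  have hfnsD : fns D = ∑ i, μ i ^ 2 := by
    unfold fns
    apply Finset.sum_congr rfl
    intro i _
    rw [Finset.sum_eq_single_of_mem i (Finset.mem_univ i)]
    · rw [hD]
      have h1 : Matrix.diagonal (RCLike.ofReal ∘ μ) i i = ((μ i : ℝ) : ℂ) := by
        rw [Matrix.diagonal_apply_eq]; rfl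
      rw [h1, Complex.normSq_ofReal]; ring
    · intro b _ hbi
      rw [hD, Matrix.diagonal_apply_ne _ (Ne.symm hbi)]
      simp
  have hDH : fns D = fns H := by rw [hDeq]; exact fns_unitary U H hU1 hU2
  have hfnsA : fns A' = ∑ i, μ i ^ 2 := by rw [← hfnsH, ← hDH, hfnsD]
  have hfnsC : fns C = fns B' := by rw [hC]; exact fns_unitary U B' hU1 hU2
  set K : Matrix (Fin m) (Fin m) ℂ := A' * B' - B' * A' with hK
  have hKmap : (A * B - B * A).map f = K := by
    rw [hK, hA', hB']
    rw [Matrix.map_sub f (fun a b => by simp), Matrix.map_mul, Matrix.map_mul]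
  have hHBK : H * B' - B' * H = Complex.I • K := by
    rw [hK, hHdef, Matrix.smul_mul, Matrix.mul_smul, smul_sub]
  have hconj1 : star U * (H * B') * U = D * C := by
    rw [hC]
    simp only [← Matrix.mul_assoc]
    rw [hDstarU]
  have hconj2 : star U * (B' * H) * U = C * D := by
    rw [hC]
    simp only [← Matrix.mul_assoc]
    rw [Matrix.mul_assoc (star U * B') H U, hHU]
    simp only [← Matrix.mul_assoc]
  have hcomm : star U * (H * B' - B' * H) * U = D * C - C * D := by
    rw [Matrix.mul_sub, Matrix.sub_mul, hconj1, hconj2]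
  have hfnsK : fns K = fns (D * C - C * D) := by
    have h1 : fns K = fns (H * B' - B' * H) := by rw [hHBK, hfns_smulI]
    rw [h1, ← hcomm, fns_unitary _ _ hU1 hU2]
  have hentry : ∀ j k, Complex.normSq ((D * C - C * D) j k)
      = (μ j - μ k) ^ 2 * Complex.normSq (C j k) := by
    intro j k
    have h1 : (D * C - C * D) j k = (((μ j - μ k : ℝ)) : ℂ) * C j k := by
      rw [hD]
      simp only [Matrix.sub_apply, Matrix.diagonal_mul, Matrix.mul_diagonal,
        Function.comp_apply]
      have h2 : (RCLike.ofReal (μ j) : ℂ) = ((μ j : ℝ) : ℂ) := rfl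
      have h3 : (RCLike.ofReal (μ k) : ℂ) = ((μ k : ℝ) : ℂ) := rfl
      rw [h2, h3]
      push_cast
      ring
    rw [h1, Complex.normSq_mul, Complex.normSq_ofReal]
    ring
  have hfnsDC : fns (D * C - C * D) = ∑ j, ∑ k, (μ j - μ k) ^ 2 * Complex.normSq (C j k) := by
    unfold fns
    exact Finset.sum_congr rfl fun j _ => Finset.sum_congr rfl fun k _ => hentry j k
  have hkey := key_cases μ Q C hpat hQunit hGdiag
  have hsum : ∑ j, ∑ k, (μ j - μ k) ^ 2 * Complex.normSq (C j k)
      ≤ (∑ i, μ i ^ 2) * fns C := by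
    unfold fns
    rw [Finset.mul_sum]
    apply Finset.sum_le_sum
    intro j _
    rw [Finset.mul_sum]
    apply Finset.sum_le_sum
    intro k _
    rcases hkey j k with h | h
    · simp [h]
    · exact mul_le_mul_of_nonneg_right h (Complex.normSq_nonneg _)
  have hfrob : ∀ M : Matrix (Fin m) (Fin m) ℝ, frobNorm M ^ 2 = fns (M.map f) := by
    intro M
    rw [frobNorm_sq, hf, ← fns_map_ofReal]
  have hfinal : fns K ≤ fns A' * fns B' := by
    rw [hfnsK, hfnsDC, ← hfnsC, hfnsA]
    exact hsum
  rw [hfrob, hfrob, hfrob, hKmap, ← hA', ← hB']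
  exact hfinal
end BL


/-- Core estimate in the proof of Lemma 2.6 of the paper: for skew-symmetric
matrices `P¹, P², P³`,
`‖[P¹,P²]‖² + ‖[P¹,P³]‖² + ‖[P²,P³]‖² ≤ (1/3)(‖P¹‖² + ‖P²‖² + ‖P³‖²)²`. -/
theorem skew_triple_commutator_sum_le (m : ℕ)
    (P₁ P₂ P₃ : Matrix (Fin m) (Fin m) ℝ)
    (h₁ : P₁ᵀ = -P₁) (h₂ : P₂ᵀ = -P₂) (h₃ : P₃ᵀ = -P₃) :
    frobNorm (P₁ * P₂ - P₂ * P₁) ^ 2 + frobNorm (P₁ * P₃ - P₃ * P₁) ^ 2 +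
        frobNorm (P₂ * P₃ - P₃ * P₂) ^ 2 ≤
      (1 / 3) * (frobNorm P₁ ^ 2 + frobNorm P₂ ^ 2 + frobNorm P₃ ^ 2) ^ 2 := by
  have b12 := BL P₁ P₂ h₁ h₂
  have b13 := BL P₁ P₃ h₁ h₃
  have b23 := BL P₂ P₃ h₂ h₃
  have n1 : 0 ≤ frobNorm P₁ ^ 2 := sq_nonneg _
  have n2 : 0 ≤ frobNorm P₂ ^ 2 := sq_nonneg _
  have n3 : 0 ≤ frobNorm P₃ ^ 2 := sq_nonneg _
  nlinarith [sq_nonneg (frobNorm P₁ ^ 2 - frobNorm P₂ ^ 2),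
    sq_nonneg (frobNorm P₁ ^ 2 - frobNorm P₃ ^ 2),
    sq_nonneg (frobNorm P₂ ^ 2 - frobNorm P₃ ^ 2)]
end

section
/- Let $P = (P_{ij})_{1 \leq i,j \leq 4}$ be a self-dual $\mathfrak{so}(m)$-valued 2-form, i.e. each $P_{ij}$ is a real skew-symmetric $m \times m$ matrix, $P_{ij} = -P_{ji}$, and $P_{12} = P_{34}$, $P_{13} = P_{42}$, $P_{14} = P_{23}$. Define $[P,P]_{ij} = 2\sum_{k=1}^4 [P_{ik}, P_{jk}]$, the inner product $\langle P, Q \rangle = \sum_{i,j=1}^4 \big( -\tfrac{1}{2} \operatorname{tr}(P_{ij} Q_{ij}) \big)$, and $|P| = \langle P, P\rangle^{1/2}$. Then $\langle P, [P,P] \rangle \leq \tfrac{4}{\sqrt{6}} \, |P|^3$. -/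
open Matrix

/-- A self-dual `𝔰𝔬(m)`-valued 2-form on `ℝ⁴` (indices here `0`-based). -/
def IsSelfDualForm {m : ℕ} (P : Fin 4 → Fin 4 → Matrix (Fin m) (Fin m) ℝ) : Prop :=
  (∀ i j, (P i j)ᵀ = -(P i j)) ∧ (∀ i j, P i j = -(P j i)) ∧
    P 0 1 = P 2 3 ∧ P 0 2 = P 3 1 ∧ P 0 3 = P 1 2

/-- The self-bracket `[P,P]ᵢⱼ = 2 ∑ₖ [Pᵢₖ, Pⱼₖ]`. -/
def selfBracket {m : ℕ} (P : Fin 4 → Fin 4 → Matrix (Fin m) (Fin m) ℝ) :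
    Fin 4 → Fin 4 → Matrix (Fin m) (Fin m) ℝ :=
  fun i j => 2 • ∑ k : Fin 4, (P i k * P j k - P j k * P i k)

/-- The inner product `⟨P, Q⟩ = ∑ᵢⱼ (-(1/2) tr (Pᵢⱼ Qᵢⱼ))` on `𝔰𝔬(m)`-valued
2-forms. -/
noncomputable def formInner {m : ℕ}
    (P Q : Fin 4 → Fin 4 → Matrix (Fin m) (Fin m) ℝ) : ℝ :=
  ∑ i : Fin 4, ∑ j : Fin 4, (-(1 / 2) * Matrix.trace (P i j * Q i j))

/-!
A self-dual form is determined by `A = P₁₂`, `B = P₁₃`, `C = P₁₄`, and then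
`|P|² = 2 (‖A‖² + ‖B‖² + ‖C‖²)` and `⟨P, [P,P]⟩ = 24 tr (Aᵀ [B, C])`, with Frobenius norms.
Cauchy–Schwarz, the estimate `‖[B, C]‖ ≤ ‖B‖ ‖C‖` for skew-symmetric `B`, `C`, and AM–GM for
`‖A‖ ‖B‖ ‖C‖` give the bound.

For the commutator estimate, diagonalize the Hermitian matrix `H = iB` as `U D U*`. As `H` is
purely imaginary, `H Ū = -Ū D`; hence `U* [H, C] Ū = D N + N D` with `N = U* C Ū` skew-symmetric,
so `‖[B, C]‖² = ∑_{j ≠ l} (λⱼ + λₗ)² |Nⱼₗ|²`. The same relation makes the unitary `U* Ū`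
intertwine `D` and `-D`, so `∑ (λᵢ⁺)² = ∑ (λᵢ⁻)² = ‖B‖²/2`, which bounds `(λⱼ + λₗ)²` by `‖B‖²`
for `j ≠ l`.
-/

open scoped Matrix.Norms.Frobenius

theorem sq_add_le_sum_sq_of_sum_sq_max_eq {ι : Type*} [Fintype ι] (x : ι → ℝ)
    (hx : ∑ i, max (x i) 0 ^ 2 = ∑ i, max (-x i) 0 ^ 2) {j l : ι} (hjl : j ≠ l) :
    (x j + x l) ^ 2 ≤ ∑ i, x i ^ 2 := by
  have hsplit : ∑ i, x i ^ 2 = ∑ i, max (x i) 0 ^ 2 + ∑ i, max (-x i) 0 ^ 2 := by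
    rw [← Finset.sum_add_distrib]
    refine Finset.sum_congr rfl fun i _ => ?_
    rcases le_total 0 (x i) with h | h <;> simp [h]
  have pair (y : ι → ℝ) : y j ^ 2 + y l ^ 2 ≤ ∑ i, y i ^ 2 :=
    Finset.add_le_sum (fun i _ => sq_nonneg (y i)) (Finset.mem_univ j) (Finset.mem_univ l) hjl
  have hpos := pair fun i => max (x i) 0
  have hneg := pair fun i => max (-x i) 0
  rcases le_total 0 (x j + x l) with h | h
  · nlinarith [le_max_left (x j) 0, le_max_left (x l) 0, le_max_right (x j) 0,
      le_max_right (x l) 0, sq_nonneg (max (x j) 0 - max (x l) 0)]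
  · nlinarith [le_max_left (-x j) 0, le_max_left (-x l) 0, le_max_right (-x j) 0,
      le_max_right (-x l) 0, sq_nonneg (max (-x j) 0 - max (-x l) 0)]

theorem mul_mul_le_sqrt_pow_three {a b c : ℝ} (ha : 0 ≤ a) (hb : 0 ≤ b) (hc : 0 ≤ c) :
    a * b * c ≤ √((a ^ 2 + b ^ 2 + c ^ 2) / 3) ^ 3 := by
  have amgm : 27 * (a ^ 2 * b ^ 2 * c ^ 2) ≤ (a ^ 2 + b ^ 2 + c ^ 2) ^ 3 := by
    nlinarith [sq_nonneg (a ^ 2 - b ^ 2), sq_nonneg (b ^ 2 - c ^ 2), sq_nonneg (a ^ 2 - c ^ 2),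
      mul_nonneg (sq_nonneg a) (sq_nonneg (b ^ 2 - c ^ 2)),
      mul_nonneg (sq_nonneg b) (sq_nonneg (a ^ 2 - c ^ 2)),
      mul_nonneg (sq_nonneg c) (sq_nonneg (a ^ 2 - b ^ 2))]
  refine (pow_le_pow_iff_left₀ (by positivity) (by positivity) two_ne_zero).mp ?_
  rw [← pow_mul, mul_comm 3 2, pow_mul, Real.sq_sqrt (by positivity)]
  linarith

namespace Matrix

variable {𝕜 : Type*} [RCLike 𝕜] {m n : Type*} [Fintype m] [Fintype n]

theorem frobenius_norm_sq_eq_sum {α : Type*} [NormedAddCommGroup α] (A : Matrix m n α) :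
    ‖A‖ ^ 2 = ∑ i, ∑ j, ‖A i j‖ ^ 2 := by
  simp only [frobenius_norm_def, Real.rpow_two, ← Real.sqrt_eq_rpow]
  exact Real.sq_sqrt (by positivity)

theorem frobenius_norm_sq_eq_re_trace (A : Matrix m n 𝕜) :
    ‖A‖ ^ 2 = RCLike.re (trace (Aᴴ * A)) := by
  rw [frobenius_norm_sq_eq_sum, Finset.sum_comm]
  simp only [trace, diag, mul_apply, conjTranspose_apply, RCLike.star_def, RCLike.conj_mul,
    map_sum]
  norm_cast

theorem trace_mul_self_of_transpose_eq_neg {A : Matrix n n ℝ} (hA : Aᵀ = -A) :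
    trace (A * A) = -‖A‖ ^ 2 := by
  rw [frobenius_norm_sq_eq_re_trace, conjTranspose_eq_transpose_of_trivial, hA, RCLike.re_to_real,
    Matrix.neg_mul, trace_neg, neg_neg]

theorem trace_transpose_mul_le_frobenius_norm_mul (A B : Matrix m n ℝ) :
    trace (Aᵀ * B) ≤ ‖A‖ * ‖B‖ := by
  have h : trace (Aᵀ * B) = inner ℝ (WithLp.toLp 2 fun i => WithLp.toLp 2 fun j => A i j)
      (WithLp.toLp 2 fun i => WithLp.toLp 2 fun j => B i j) := by
    simp only [trace, diag, mul_apply, transpose_apply, PiLp.inner_apply, RCLike.inner_apply,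
      conj_trivial]
    rw [Finset.sum_comm]
    simp only [mul_comm]
  rw [h]
  exact real_inner_le_norm _ _

theorem frobenius_norm_unitary_mul [DecidableEq m] {U : Matrix m m 𝕜}
    (hU : U ∈ unitaryGroup m 𝕜) (A : Matrix m n 𝕜) : ‖U * A‖ = ‖A‖ := by
  have h : (U * A)ᴴ * (U * A) = Aᴴ * A := by
    rw [conjTranspose_mul, ← star_eq_conjTranspose, Matrix.mul_assoc, ← Matrix.mul_assoc (star U),
      Unitary.star_mul_self_of_mem hU, Matrix.one_mul]
  rw [← sq_eq_sq₀ (norm_nonneg _) (norm_nonneg _), frobenius_norm_sq_eq_re_trace,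
    frobenius_norm_sq_eq_re_trace, h]

theorem frobenius_norm_mul_unitary [DecidableEq n] {U : Matrix n n 𝕜}
    (hU : U ∈ unitaryGroup n 𝕜) (A : Matrix m n 𝕜) : ‖A * U‖ = ‖A‖ := by
  rw [← frobenius_norm_conjTranspose, conjTranspose_mul, ← star_eq_conjTranspose,
    frobenius_norm_unitary_mul (Unitary.star_mem hU), frobenius_norm_conjTranspose]

variable [DecidableEq n]

theorem trace_eq_of_mul_eq_mul_of_mem_unitaryGroup {W X Y : Matrix n n 𝕜}
    (hW : W ∈ unitaryGroup n 𝕜) (h : X * W = W * Y) : trace X = trace Y := by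
  have hX : X = W * Y * star W := by
    rw [← h, Matrix.mul_assoc, Unitary.mul_star_self_of_mem hW, Matrix.mul_one]
  rw [hX, trace_mul_cycle, Unitary.star_mul_self_of_mem hW, Matrix.one_mul]

theorem frobenius_norm_sq_diagonal_mul_add_mul_diagonal (x : n → ℝ) (N : Matrix n n 𝕜) :
    ‖diagonal (RCLike.ofReal ∘ x : n → 𝕜) * N + N * diagonal (RCLike.ofReal ∘ x)‖ ^ 2
      = ∑ j, ∑ l, (x j + x l) ^ 2 * ‖N j l‖ ^ 2 := by
  simp only [frobenius_norm_sq_eq_sum, add_apply, diagonal_mul, mul_diagonal, Function.comp_apply]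
  refine Finset.sum_congr rfl fun j _ => Finset.sum_congr rfl fun l _ => ?_
  rw [mul_comm (N j l), ← add_mul, norm_mul, mul_pow, ← RCLike.ofReal_add, RCLike.norm_ofReal,
    sq_abs]

namespace IsHermitian

variable {H : Matrix n n 𝕜} (hH : H.IsHermitian)

local notation "U" => (hH.eigenvectorUnitary : Matrix n n 𝕜)
local notation "D" => diagonal (RCLike.ofReal ∘ hH.eigenvalues : n → 𝕜)

theorem mul_eigenvectorUnitary : H * U = U * D := by
  have h := congrArg (· * U) hH.spectral_theorem
  simpa [Matrix.mul_assoc] using h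

theorem star_eigenvectorUnitary_mul : star U * H = D * star U := by
  have h := congrArg (star U * ·) hH.spectral_theorem
  simpa [← Matrix.mul_assoc] using h

theorem mul_map_star_eigenvectorUnitary (hconj : H.map star = -H) :
    H * (U).map star = -((U).map star * D) := by
  have h := congrArg (Matrix.map · (starRingEnd 𝕜)) hH.mul_eigenvectorUnitary
  have hD : (D).map (starRingEnd 𝕜) = D := by simp
  rw [Matrix.map_mul, Matrix.map_mul, hD, show ⇑(starRingEnd 𝕜) = star from rfl, hconj] at h
  rw [← h, neg_mul, neg_neg]

theorem sum_eigenvalues_comp_neg (hconj : H.map star = -H) (g : ℝ → ℝ) :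
    ∑ i, g (hH.eigenvalues i) = ∑ i, g (-hH.eigenvalues i) := by
  set W := star U * (U).map star
  have hW : W ∈ unitaryGroup n 𝕜 :=
    Submonoid.mul_mem _ (Unitary.star_mem (SetLike.coe_mem _))
      (map_star_mem_unitaryGroup_iff.mpr (SetLike.coe_mem _))
  have hDW : D * W = -(W * D) := by
    rw [← Matrix.mul_assoc, ← hH.star_eigenvectorUnitary_mul, Matrix.mul_assoc,
      hH.mul_map_star_eigenvectorUnitary hconj, Matrix.mul_neg, Matrix.mul_assoc]
  have hsupp : ∀ i l, W i l ≠ 0 → hH.eigenvalues i = -hH.eigenvalues l := by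
    intro i l hil
    have h := congrFun (congrFun hDW i) l
    simp only [diagonal_mul, mul_diagonal, neg_apply, Function.comp_apply] at h
    have h' : ((hH.eigenvalues i + hH.eigenvalues l : ℝ) : 𝕜) * W i l = 0 := by
      push_cast; linear_combination h
    have := (mul_eq_zero.mp h').resolve_right hil
    exact_mod_cast eq_neg_of_add_eq_zero_left (by exact_mod_cast this)
  have key : diagonal (fun i => (g (hH.eigenvalues i) : 𝕜)) * W
      = W * diagonal (fun i => (g (-hH.eigenvalues i) : 𝕜)) := by
    ext i l
    by_cases hil : W i l = 0
    · simp [diagonal_mul, mul_diagonal, hil]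
    · simp [diagonal_mul, mul_diagonal, hsupp i l hil, mul_comm]
  have := trace_eq_of_mul_eq_mul_of_mem_unitaryGroup hW key
  simp only [trace_diagonal] at this
  exact_mod_cast this

theorem frobenius_norm_sq_eq_sum_eigenvalues_sq : ‖H‖ ^ 2 = ∑ i, hH.eigenvalues i ^ 2 := by
  have hD : star U * H * U = D := by
    rw [hH.star_eigenvectorUnitary_mul, Matrix.mul_assoc,
      Unitary.star_mul_self_of_mem (SetLike.coe_mem _), Matrix.mul_one]
  rw [← frobenius_norm_mul_unitary (SetLike.coe_mem _),
    ← frobenius_norm_unitary_mul (Unitary.star_mem (SetLike.coe_mem _)), ← Matrix.mul_assoc, hD,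
    frobenius_norm_diagonal, PiLp.norm_sq_eq_of_L2]
  simp

theorem star_eigenvectorUnitary_mul_commutator_mul (hconj : H.map star = -H) (C : Matrix n n 𝕜) :
    star U * (H * C - C * H) * (U).map star
      = D * (star U * C * (U).map star) + star U * C * (U).map star * D := by
  simp only [Matrix.mul_sub, Matrix.sub_mul, Matrix.mul_assoc]
  rw [hH.mul_map_star_eigenvectorUnitary hconj, ← Matrix.mul_assoc (star U) H,
    hH.star_eigenvectorUnitary_mul]
  simp only [Matrix.mul_assoc, Matrix.mul_neg, sub_neg_eq_add]

include hH in
theorem frobenius_norm_commutator_le (hconj : H.map star = -H) {C : Matrix n n 𝕜}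
    (hC : Cᵀ = -C) : ‖H * C - C * H‖ ≤ ‖H‖ * ‖C‖ := by
  have hU : U ∈ unitaryGroup n 𝕜 := SetLike.coe_mem _
  have hŪ : (U).map star ∈ unitaryGroup n 𝕜 := map_star_mem_unitaryGroup_iff.mpr hU
  set N := star U * C * (U).map star with hNdef
  have hnormN : ‖N‖ = ‖C‖ := by
    rw [hNdef, frobenius_norm_mul_unitary hŪ, frobenius_norm_unitary_mul (Unitary.star_mem hU)]
  have hN : Nᵀ = -N := by
    rw [transpose_mul, transpose_mul, hC, show ((U).map star)ᵀ = star U from rfl,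
      show (star U)ᵀ = (U).map star from rfl]
    simp [N, Matrix.mul_assoc]
  have hNdiag (j : n) : N j j = 0 := by
    have h := congrFun (congrFun hN j) j
    simp only [transpose_apply, neg_apply] at h
    linear_combination h / 2
  have hsymm := hH.sum_eigenvalues_comp_neg hconj (fun x => max x 0 ^ 2)
  have hsq : ‖H * C - C * H‖ ^ 2 ≤ (‖H‖ * ‖C‖) ^ 2 := calc
    ‖H * C - C * H‖ ^ 2 = ‖D * N + N * D‖ ^ 2 := by
      rw [← hH.star_eigenvectorUnitary_mul_commutator_mul hconj, frobenius_norm_mul_unitary hŪ,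
        frobenius_norm_unitary_mul (Unitary.star_mem hU)]
    _ = ∑ j, ∑ l, (hH.eigenvalues j + hH.eigenvalues l) ^ 2 * ‖N j l‖ ^ 2 :=
      frobenius_norm_sq_diagonal_mul_add_mul_diagonal _ _
    _ ≤ ∑ j, ∑ l, (∑ i, hH.eigenvalues i ^ 2) * ‖N j l‖ ^ 2 := by
      refine Finset.sum_le_sum fun j _ => Finset.sum_le_sum fun l _ => ?_
      rcases eq_or_ne j l with rfl | hjl
      · simp [hNdiag]
      · exact mul_le_mul_of_nonneg_right
          (sq_add_le_sum_sq_of_sum_sq_max_eq _ hsymm hjl) (sq_nonneg _)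
    _ = (‖H‖ * ‖C‖) ^ 2 := by
      rw [mul_pow, hH.frobenius_norm_sq_eq_sum_eigenvalues_sq, ← hnormN,
        frobenius_norm_sq_eq_sum, Finset.mul_sum]
      simp_rw [Finset.mul_sum]
  exact (pow_le_pow_iff_left₀ (norm_nonneg _) (by positivity) two_ne_zero).mp hsq

end IsHermitian

theorem frobenius_norm_commutator_le_of_transpose_eq_neg {B C : Matrix n n ℝ} (hB : Bᵀ = -B)
    (hC : Cᵀ = -C) : ‖B * C - C * B‖ ≤ ‖B‖ * ‖C‖ := by
  set H : Matrix n n ℂ := Complex.I • B.map Complex.ofRealHom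
  have hH : H.IsHermitian := by
    ext i j
    have h := congrFun (congrFun hB i) j
    simp only [transpose_apply, neg_apply] at h
    simp [H, h]
  have hconj : H.map star = -H := by
    ext i j
    simp [H]
  have hCc : (C.map Complex.ofRealHom)ᵀ = -C.map Complex.ofRealHom := by
    rw [← transpose_map, hC, Matrix.map_neg _ (map_neg _)]
  have hcomm : H * C.map Complex.ofRealHom - C.map Complex.ofRealHom * H
      = Complex.I • (B * C - C * B).map Complex.ofRealHom := by
    simp [H, Matrix.map_mul, Matrix.map_sub, smul_sub]
  have hnorm (X : Matrix n n ℝ) : ‖X.map Complex.ofRealHom‖ = ‖X‖ :=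
    frobenius_norm_map_eq X _ fun x => by simp
  have hnormH : ‖H‖ = ‖B‖ := by simp [H, norm_smul, hnorm]
  simpa [hcomm, norm_smul, hnorm, hnormH] using hH.frobenius_norm_commutator_le hconj hCc

theorem trace_transpose_mul_commutator_le (A : Matrix n n ℝ) {B C : Matrix n n ℝ}
    (hB : Bᵀ = -B) (hC : Cᵀ = -C) : trace (Aᵀ * (B * C - C * B)) ≤ ‖A‖ * ‖B‖ * ‖C‖ := by
  rw [mul_assoc]
  exact (trace_transpose_mul_le_frobenius_norm_mul _ _).trans
    (by gcongr; exact frobenius_norm_commutator_le_of_transpose_eq_neg hB hC)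

end Matrix

theorem four_div_sqrt_six_mul_sqrt_two_mul_pow_three (q : ℝ) :
    4 / √6 * √(2 * q) ^ 3 = 24 * √(q / 3) ^ 3 := by
  have h6 : √(2 * q) = √6 * √(q / 3) := by
    rw [← Real.sqrt_mul (by norm_num)]
    ring_nf
  have hsq : √6 ^ 2 = 6 := Real.sq_sqrt (by norm_num)
  rw [h6, mul_pow, show √6 ^ 3 = √6 ^ 2 * √6 by ring, hsq]
  field_simp
  ring

def selfDualForm {n : Type*} (A B C : Matrix n n ℝ) : Fin 4 → Fin 4 → Matrix n n ℝ :=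
  ![![0, A, B, C], ![-A, 0, C, -B], ![-B, -C, 0, A], ![-C, B, -A, 0]]

theorem IsSelfDualForm.eq_selfDualForm {m : ℕ} {P : Fin 4 → Fin 4 → Matrix (Fin m) (Fin m) ℝ}
    (hP : IsSelfDualForm P) : P = selfDualForm (P 0 1) (P 0 2) (P 0 3) := by
  obtain ⟨-, hanti, h1, h2, h3⟩ := hP
  have hdiag (i : Fin 4) : P i i = 0 := by
    have h := hanti i i
    rwa [eq_neg_iff_add_eq_zero, ← two_smul ℝ, smul_eq_zero, or_iff_right two_ne_zero] at h
  ext1 i; ext1 j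
  fin_cases i <;> fin_cases j <;> simp [selfDualForm, hdiag, hanti 1 0, hanti 2 0, hanti 3 0,
    hanti 3 2, hanti 1 3, hanti 2 1, h1, h2, h3]

theorem formInner_selfDualForm_self {m : ℕ} (A B C : Matrix (Fin m) (Fin m) ℝ) :
    formInner (selfDualForm A B C) (selfDualForm A B C) = -2 * trace (A * A + B * B + C * C) := by
  simp [formInner, selfDualForm, Fin.sum_univ_four, trace_add]
  ring

theorem formInner_selfDualForm_selfBracket {m : ℕ} (A B C : Matrix (Fin m) (Fin m) ℝ) :
    formInner (selfDualForm A B C) (selfBracket (selfDualForm A B C))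
      = 24 * trace (A * (C * B - B * C)) := by
  have hBCA : trace (B * (C * A)) = trace (A * (B * C)) := trace_mul_cycle' _ _ _
  have hCAB : trace (C * (A * B)) = trace (A * (B * C)) := (trace_mul_cycle' _ _ _).symm
  have hCBA : trace (C * (B * A)) = trace (A * (C * B)) := trace_mul_cycle' _ _ _
  have hBAC : trace (B * (A * C)) = trace (A * (C * B)) := (trace_mul_cycle' _ _ _).symm
  simp only [formInner, selfBracket, Matrix.mul_smul, trace_smul]
  simp [selfDualForm, Fin.sum_univ_four, mul_add, mul_sub, trace_add, trace_sub, hBCA, hCAB,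
    hCBA, hBAC]
  ring

/-- The universal bound `γ₁ ≤ 4/√6` of the paper: for any self-dual
`𝔰𝔬(m)`-valued 2-form `P`, `⟨P, [P,P]⟩ ≤ (4/√6) |P|³`. -/
theorem formInner_selfBracket_le {m : ℕ}
    (P : Fin 4 → Fin 4 → Matrix (Fin m) (Fin m) ℝ) (hP : IsSelfDualForm P) :
    formInner P (selfBracket P) ≤
      (4 / Real.sqrt 6) * Real.sqrt (formInner P P) ^ 3 := by
  rw [hP.eq_selfDualForm]
  obtain ⟨hskew, -⟩ := hP
  set A := P 0 1
  set B := P 0 2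
  set C := P 0 3
  have hA : Aᵀ = -A := hskew 0 1
  have hB : Bᵀ = -B := hskew 0 2
  have hC : Cᵀ = -C := hskew 0 3
  have hnorm : formInner (selfDualForm A B C) (selfDualForm A B C)
      = 2 * (‖A‖ ^ 2 + ‖B‖ ^ 2 + ‖C‖ ^ 2) := by
    rw [formInner_selfDualForm_self, trace_add, trace_add, trace_mul_self_of_transpose_eq_neg hA,
      trace_mul_self_of_transpose_eq_neg hB, trace_mul_self_of_transpose_eq_neg hC]
    ring
  rw [hnorm, formInner_selfDualForm_selfBracket, four_div_sqrt_six_mul_sqrt_two_mul_pow_three]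
  gcongr 24 * ?_
  calc trace (A * (C * B - B * C))
      = trace (Aᵀ * (B * C - C * B)) := by rw [hA, Matrix.neg_mul, ← Matrix.mul_neg, neg_sub]
    _ ≤ ‖A‖ * ‖B‖ * ‖C‖ := trace_transpose_mul_commutator_le A hB hC
    _ ≤ √((‖A‖ ^ 2 + ‖B‖ ^ 2 + ‖C‖ ^ 2) / 3) ^ 3 :=
      mul_mul_le_sqrt_pow_three (norm_nonneg A) (norm_nonneg B) (norm_nonneg C)
end
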